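/- arXiv:2104.07285 — 2 statements merged into one kernel-verified Lean document; each statement's English description precedes it below -/
import Mathlib

section
/- For every m ≥ 1 the following two identities hold in PolC_I: Σ_{l=0}^{m} (−1)^l h^{(n)}_{m−l} (Π_{j=2}^{l} κ̃_{1,j}) e^{(n)}_l = 0 and Σ_{l=0}^{m} (−1)^l (Π_{j=2}^{l} κ̃_{1,j}) e^{(n)}_l h^{(n)}_{m−l} = 0, where the product Π_{j=2}^{l} κ̃_{1,j} is the empty product 1 for l ≤ 1 and e^{(n)}_l := 0 for l > n. -/
noncomputable section

/- Context: index set `{1,…,n}` with parity function `p`; the Clifford algebra `C_I` on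
odd generators (`cᵢ := 0` for even `i`) and the polynomial Clifford algebra `PolC k n p`. -/

inductive PolCRel (k : Type) [Field k] (n : ℕ) (p : Fin n → Bool) :
    FreeAlgebra k (Fin n ⊕ Fin n) → FreeAlgebra k (Fin n ⊕ Fin n) → Prop
  | ycomm (i j : Fin n) :
      PolCRel k n p (FreeAlgebra.ι k (Sum.inl i) * FreeAlgebra.ι k (Sum.inl j))
        (FreeAlgebra.ι k (Sum.inl j) * FreeAlgebra.ι k (Sum.inl i))
  | cAnticomm (i j : Fin n) (hij : i ≠ j) :
      PolCRel k n p (FreeAlgebra.ι k (Sum.inr i) * FreeAlgebra.ι k (Sum.inr j))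
        (-(FreeAlgebra.ι k (Sum.inr j) * FreeAlgebra.ι k (Sum.inr i)))
  | cSq (i : Fin n) (h : p i = true) :
      PolCRel k n p (FreeAlgebra.ι k (Sum.inr i) * FreeAlgebra.ι k (Sum.inr i)) 1
  | cZero (i : Fin n) (h : p i = false) :
      PolCRel k n p (FreeAlgebra.ι k (Sum.inr i)) 0
  | ycSame (i : Fin n) :
      PolCRel k n p (FreeAlgebra.ι k (Sum.inl i) * FreeAlgebra.ι k (Sum.inr i))
        (-(FreeAlgebra.ι k (Sum.inr i) * FreeAlgebra.ι k (Sum.inl i)))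
  | ycDiff (i j : Fin n) (hij : i ≠ j) :
      PolCRel k n p (FreeAlgebra.ι k (Sum.inl i) * FreeAlgebra.ι k (Sum.inr j))
        (FreeAlgebra.ι k (Sum.inr j) * FreeAlgebra.ι k (Sum.inl i))

/-- The polynomial Clifford algebra `PolC_I`. -/
abbrev PolC (k : Type) [Field k] (n : ℕ) (p : Fin n → Bool) := RingQuot (PolCRel k n p)

/-- The polynomial generators `yᵢ` (for `i : Fin n`, i.e. 0-based). -/
def Y (k : Type) [Field k] (n : ℕ) (p : Fin n → Bool) (i : Fin n) : PolC k n p :=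
  RingQuot.mkAlgHom k (PolCRel k n p) (FreeAlgebra.ι k (Sum.inl i))

/-- The Clifford generators `cᵢ` (for `i : Fin n`; this is `0` if `i` is even). -/
def Cc (k : Type) [Field k] (n : ℕ) (p : Fin n → Bool) (i : Fin n) : PolC k n p :=
  RingQuot.mkAlgHom k (PolCRel k n p) (FreeAlgebra.ι k (Sum.inr i))

/-- The defining properties of the `i`-th Clifford Demazure operator (`i` is 0-based here,
so this is the paper's `d_{i+1}` acting on `y_{i+1}, y_{i+2}`). -/
def DemSpec (k : Type) [Field k] (n : ℕ) (p : Fin n → Bool) (i : ℕ) (hi : i + 1 < n)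
    (si : PolC k n p →ₐ[k] PolC k n p) (d : PolC k n p →ₗ[k] PolC k n p) : Prop :=
  d 1 = 0 ∧
  d (Y k n p ⟨i, by omega⟩) = -1 - Cc k n p ⟨i, by omega⟩ * Cc k n p ⟨i + 1, hi⟩ ∧
  d (Y k n p ⟨i + 1, hi⟩) = 1 - Cc k n p ⟨i, by omega⟩ * Cc k n p ⟨i + 1, hi⟩ ∧
  (∀ j : Fin n, (j : ℕ) ≠ i → (j : ℕ) ≠ i + 1 → d (Y k n p j) = 0) ∧
  (∀ j : Fin n, d (Cc k n p j) = 0) ∧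
  (∀ f g : PolC k n p, d (f * g) = d f * g + si f * d g)

/-- The property that `si` is the algebra automorphism given by the simple transposition
`sᵢ = (i, i+1)`, permuting the `y`'s and `c`'s simultaneously (0-based `i`). -/
def SwapSpec (k : Type) [Field k] (n : ℕ) (p : Fin n → Bool) (i : ℕ) (hi : i + 1 < n)
    (si : PolC k n p →ₐ[k] PolC k n p) : Prop :=
  ∀ j : Fin n,
    si (Y k n p j) = Y k n p (Equiv.swap ⟨i, by omega⟩ ⟨i + 1, hi⟩ j) ∧
    si (Cc k n p j) = Cc k n p (Equiv.swap ⟨i, by omega⟩ ⟨i + 1, hi⟩ j)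

/-- `γ_{l,l+1}` (1-based index `l`): equal to `c_l` if `l`, `l+1` are both odd,
`1` otherwise; with the convention `γ_{n,n+1} := 1`.  Stated generically for a ring `A`
with distinguished elements `c : Fin n → A`. -/
def gammaUp (A : Type) [Ring A] (n : ℕ) (p : Fin n → Bool) (c : Fin n → A) (l : ℕ) : A :=
  if h : 1 ≤ l ∧ l < n then
    (if p ⟨l - 1, by omega⟩ = true ∧ p ⟨l, h.2⟩ = true then c ⟨l - 1, by omega⟩ else 1)
  else 1

/-- `γ_{l,l-1}` (1-based index `l`): equal to `-c_l` if `l`, `l-1` are both odd,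
`1` otherwise. -/
def gammaDown (A : Type) [Ring A] (n : ℕ) (p : Fin n → Bool) (c : Fin n → A) (l : ℕ) : A :=
  if h : 2 ≤ l ∧ l ≤ n then
    (if p ⟨l - 1, by omega⟩ = true ∧ p ⟨l - 2, by omega⟩ = true then -c ⟨l - 1, by omega⟩
      else 1)
  else 1

/-- `κ_{m,l}` (1-based, `m ≤ l`): `κ_{l,l} = γ_{l,l+1}` and for `m < l`
`κ_{m,l} = (γ_{m+1,m}γ_{m+1,m+2})⋯(γ_{l-1,l-2}γ_{l-1,l})·γ_{l,l-1}`. -/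
def kappa (A : Type) [Ring A] (n : ℕ) (p : Fin n → Bool) (c : Fin n → A) (m l : ℕ) : A :=
  if m = l then gammaUp A n p c l
  else
    ((List.range (l - 1 - m)).map
        (fun t => gammaDown A n p c (m + 1 + t) * gammaUp A n p c (m + 1 + t))).prod *
      gammaDown A n p c l

/-- `κ̃_{m,l} := κ_{m,l} · γ_{l,l+1}`. -/
def kappaT (A : Type) [Ring A] (n : ℕ) (p : Fin n → Bool) (c : Fin n → A) (m l : ℕ) : A :=
  kappa A n p c m l * gammaUp A n p c l

/-- The variable `y_l` with 1-based index `l` (zero outside `1 ≤ l ≤ n`). -/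
def Yn (k : Type) [Field k] (n : ℕ) (p : Fin n → Bool) (l : ℕ) : PolC k n p :=
  if h : 1 ≤ l ∧ l ≤ n then Y k n p ⟨l - 1, by omega⟩ else 0

/-- The elementary `𝔡`-symmetric polynomials `e^{(kk)}_m`, defined recursively by
`e^{(kk)}_0 = 1`, `e^{(0)}_m = 0` for `m ≥ 1`, and
`e^{(kk)}_m = e^{(kk-1)}_m + e^{(kk-1)}_{m-1} κ_{m,kk} y_kk`. -/
def esym (k : Type) [Field k] (n : ℕ) (p : Fin n → Bool) : ℕ → ℕ → PolC k n p
  | _, 0 => 1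
  | 0, _ + 1 => 0
  | kk + 1, m + 1 =>
      esym k n p kk (m + 1) +
        esym k n p kk m *
          (kappa (PolC k n p) n p (Cc k n p) (m + 1) (kk + 1) * Yn k n p (kk + 1))

/-- The matrix `M_{(n)}`: first column `((-1)^{l-1} e^{(n)}_l)_l`, superdiagonal entries
`κ̃_{1,l+1}`, all other entries `0`. -/
def Mmat (k : Type) [Field k] (n : ℕ) (p : Fin n → Bool) : Matrix (Fin n) (Fin n) (PolC k n p) :=
  fun i j =>
    if (j : ℕ) = 0 then (-1 : PolC k n p) ^ (i : ℕ) * esym k n p n ((i : ℕ) + 1)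
    else if (j : ℕ) = (i : ℕ) + 1 then kappaT (PolC k n p) n p (Cc k n p) 1 ((i : ℕ) + 2)
    else 0

/-- The complete symmetric polynomial `h^{(n)}_m`: the `(1,1)` entry of `M_{(n)}^m`. -/
def hsym (k : Type) [Field k] (n : ℕ) (p : Fin n → Bool) (m : ℕ) : PolC k n p :=
  if h : 0 < n then (Mmat k n p ^ m) ⟨0, h⟩ ⟨0, h⟩ else 0


/-!
Read `M_{(n)}` as the weighted adjacency matrix of the graph on `0, …, n-1` with edges
`t → t+1` of weight `κ̃_{1,t+2}` and `t → 0` of weight `(-1)^t e_{t+1}`. Then `h_m` is the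
weighted sum of closed walks of length `m` at `0`. Cutting a closed walk of length `m+1` at its
last return to `0` gives `h_{m+1} = ∑_t h_{m-t} κ̃_{1,2}⋯κ̃_{1,t+1} (-1)^t e_{t+1}`, cutting it
at its first return gives `h_{m+1} = ∑_t κ̃_{1,2}⋯κ̃_{1,t+1} (-1)^t e_{t+1} h_{m-t}`. Since
`e_0 = 1` and `(-1)^t` is central, these are the two identities.
-/

section CompanionMatrix

variable {R : Type*} [Ring R]

def companionMatrix (n : ℕ) (a b : ℕ → R) : Matrix (Fin n) (Fin n) R :=
  fun i j => if (j : ℕ) = 0 then a i else if (j : ℕ) = i + 1 then b i else 0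

variable {n : ℕ} (a b : ℕ → R)

theorem companionMatrix_apply (i j : Fin n) : companionMatrix n a b i j =
    if (j : ℕ) = 0 then a i else if (j : ℕ) = i + 1 then b i else 0 := rfl

theorem mul_companionMatrix_apply_succ (X : Matrix (Fin n) (Fin n) R) (i : Fin n) (j : ℕ)
    (hj : j + 1 < n) :
    (X * companionMatrix n a b) i ⟨j + 1, hj⟩ = X i ⟨j, by omega⟩ * b j := by
  rw [Matrix.mul_apply, Fintype.sum_eq_single ⟨j, by omega⟩]
  · simp [companionMatrix_apply]
  · intro t ht
    have ht : j ≠ t := by simpa using (Fin.val_ne_of_ne ht).symm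
    simp [companionMatrix_apply, ht]

variable [NeZero n]

theorem companionMatrix_mul_apply (X : Matrix (Fin n) (Fin n) R) (i j : Fin n) :
    (companionMatrix n a b * X) i j =
      a i * X 0 j + if h : (i : ℕ) + 1 < n then b i * X ⟨i + 1, h⟩ j else 0 := by
  rw [Matrix.mul_apply]
  split_ifs with h
  · rw [Fintype.sum_eq_add 0 ⟨i + 1, h⟩ (Fin.ne_of_val_ne (by simp))]
    · simp [companionMatrix_apply]
    · rintro t ⟨h0, hi⟩
      have h0 : (t : ℕ) ≠ 0 := by simpa using Fin.val_ne_of_ne h0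
      have hi : (t : ℕ) ≠ i + 1 := by simpa using Fin.val_ne_of_ne hi
      simp [companionMatrix_apply, h0, hi]
  · rw [Fintype.sum_eq_single 0]
    · simp [companionMatrix_apply]
    · intro t ht
      have h0 : (t : ℕ) ≠ 0 := by simpa using Fin.val_ne_of_ne ht
      have hi : (t : ℕ) ≠ i + 1 := by omega
      simp [companionMatrix_apply, h0, hi]

theorem mul_companionMatrix_apply_zero (X : Matrix (Fin n) (Fin n) R) (i : Fin n) :
    (X * companionMatrix n a b) i 0 = ∑ t, X i t * a t := by
  simp [Matrix.mul_apply, companionMatrix_apply]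

theorem companionMatrix_pow_zero_row (j : ℕ) (hj : j < n) (m : ℕ) :
    (companionMatrix n a b ^ m) 0 ⟨j, hj⟩ =
      if j ≤ m then (companionMatrix n a b ^ (m - j)) 0 0 * ((List.range j).map b).prod
      else 0 := by
  induction j generalizing m with
  | zero => simp
  | succ j ih =>
    cases m with
    | zero => simp [Fin.ext_iff]
    | succ m =>
      rw [pow_succ, mul_companionMatrix_apply_succ, ih, List.prod_range_succ]
      split_ifs <;> first | omega | simp [mul_assoc]

theorem companionMatrix_pow_succ_zero_zero (ha : ∀ t, n ≤ t → a t = 0) (m : ℕ) :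
    (companionMatrix n a b ^ (m + 1)) 0 0 = ∑ t ∈ Finset.range (m + 1),
      (companionMatrix n a b ^ (m - t)) 0 0 * ((List.range t).map b).prod * a t := by
  set F : ℕ → R := fun t =>
    (companionMatrix n a b ^ (m - t)) 0 0 * ((List.range t).map b).prod * a t
  have hF : ∀ t ∈ Finset.range (m + 1), t ∉ Finset.range n → F t = 0 := fun t _ ht => by
    simp [F, ha t (by simpa using ht)]
  calc (companionMatrix n a b ^ (m + 1)) 0 0
      = ∑ t : Fin n, if (t : ℕ) ∈ Finset.range (m + 1) then F t else 0 := by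
        rw [pow_succ, mul_companionMatrix_apply_zero]
        refine Fintype.sum_congr _ _ fun t => ?_
        rw [show t = ⟨t, t.isLt⟩ from rfl, companionMatrix_pow_zero_row]
        simp only [Finset.mem_range, Nat.lt_succ_iff, F]
        split_ifs <;> simp
    _ = ∑ t ∈ Finset.range n ∩ Finset.range (m + 1), F t := by
        rw [Fin.sum_univ_eq_sum_range (fun t => if t ∈ Finset.range (m + 1) then F t else 0),
          Finset.sum_ite_mem]
    _ = ∑ t ∈ Finset.range (m + 1), F t := by
        rw [Finset.inter_comm]
        exact Finset.sum_subset Finset.inter_subset_left fun t ht hnt =>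
          hF t ht (by simp_all)

theorem companionMatrix_pow_succ_zero_col (ha : ∀ t, n ≤ t → a t = 0) (m : ℕ) :
    ∀ i : Fin n, (companionMatrix n a b ^ (m + 1)) i 0 =
      ∑ j ∈ Finset.range (m + 1), ((List.range j).map fun s => b (i + s)).prod * a (i + j) *
        (companionMatrix n a b ^ (m - j)) 0 0 := by
  induction m with
  | zero => intro i; simp [companionMatrix_apply]
  | succ m ih =>
    intro i
    rw [pow_succ', companionMatrix_mul_apply, Finset.sum_range_succ' _ (m + 1)]
    simp only [List.range_zero, List.map_nil, List.prod_nil, one_mul, add_zero,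
      Nat.sub_zero, add_comm _ (a i * _)]
    congr 1
    split_ifs with h
    · rw [ih ⟨i + 1, h⟩, Finset.mul_sum]
      refine Finset.sum_congr rfl fun j _ => ?_
      simp [List.prod_range_succ', mul_assoc, add_assoc, add_comm 1]
    · refine (Finset.sum_eq_zero fun j _ => ?_).symm
      simp [ha (i + (j + 1)) (by omega)]

variable (e : ℕ → R)

theorem alternating_sum_companionMatrix_pow_mul_eq_zero (he₀ : e 0 = 1)
    (he : ∀ t, n < t → e t = 0) (m : ℕ) (hm : 1 ≤ m) :
    ∑ l ∈ Finset.range (m + 1), (-1 : R) ^ l *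
      (companionMatrix n (fun t => (-1) ^ t * e (t + 1)) b ^ (m - l)) 0 0 *
        ((List.range (l - 1)).map b).prod * e l = 0 := by
  obtain ⟨m, rfl⟩ : ∃ m', m = m' + 1 := ⟨m - 1, by omega⟩
  rw [Finset.sum_range_succ']
  simp only [Nat.add_sub_add_right, Nat.add_sub_cancel, Nat.sub_zero,
    zero_tsub, List.range_zero, List.map_nil, List.prod_nil, pow_zero, one_mul, mul_one, he₀]
  rw [companionMatrix_pow_succ_zero_zero _ _
    (fun t ht => by simp [he (t + 1) (by omega)]), ← Finset.sum_add_distrib]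
  refine Finset.sum_eq_zero fun l _ => ?_
  have hc := ((Commute.neg_one_left
    ((companionMatrix n (fun t => (-1) ^ t * e (t + 1)) b ^ (m - l)) 0 0 *
      ((List.range l).map b).prod)).pow_left l).eq
  rw [← mul_assoc _ ((-1) ^ l), ← hc, pow_succ]
  noncomm_ring

theorem alternating_sum_mul_companionMatrix_pow_eq_zero (he₀ : e 0 = 1)
    (he : ∀ t, n < t → e t = 0) (m : ℕ) (hm : 1 ≤ m) :
    ∑ l ∈ Finset.range (m + 1), (-1 : R) ^ l * ((List.range (l - 1)).map b).prod * e l *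
      (companionMatrix n (fun t => (-1) ^ t * e (t + 1)) b ^ (m - l)) 0 0 = 0 := by
  obtain ⟨m, rfl⟩ : ∃ m', m = m' + 1 := ⟨m - 1, by omega⟩
  rw [Finset.sum_range_succ']
  simp only [Nat.add_sub_add_right, Nat.add_sub_cancel, Nat.sub_zero,
    zero_tsub, List.range_zero, List.map_nil, List.prod_nil, pow_zero, one_mul, he₀]
  rw [companionMatrix_pow_succ_zero_col _ _
    (fun t ht => by simp [he (t + 1) (by omega)])]
  simp only [Fin.val_zero, zero_add, ← Finset.sum_add_distrib]
  refine Finset.sum_eq_zero fun l _ => ?_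
  have hc := ((Commute.neg_one_left ((List.range l).map b).prod).pow_left l).eq
  rw [← mul_assoc _ ((-1) ^ l), ← hc, pow_succ]
  noncomm_ring

end CompanionMatrix

section PolC

variable {k : Type} [Field k] {n : ℕ} {p : Fin n → Bool}

theorem esym_zero (kk : ℕ) : esym k n p kk 0 = 1 := by
  cases kk <;> rfl

theorem esym_eq_zero_of_lt : ∀ {kk m : ℕ}, kk < m → esym k n p kk m = 0
  | 0, _ + 1, _ => rfl
  | kk + 1, m + 1, h => by
    rw [esym, esym_eq_zero_of_lt (by omega : kk < m + 1), esym_eq_zero_of_lt (by omega : kk < m),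
      zero_add, zero_mul]

theorem hsym_eq_companionMatrix_pow [NeZero n] (m : ℕ) :
    hsym k n p m = (companionMatrix n (fun t => (-1) ^ t * esym k n p n (t + 1))
      (fun t => kappaT (PolC k n p) n p (Cc k n p) 1 (t + 2)) ^ m) 0 0 := by
  rw [hsym, dif_pos (NeZero.pos n)]
  rfl

end PolC

/-- for every `m ≥ 1`,
`Σ_{l=0}^{m} (−1)^l h^{(n)}_{m−l} (Π_{j=2}^{l} κ̃_{1,j}) e^{(n)}_l = 0` and
`Σ_{l=0}^{m} (−1)^l (Π_{j=2}^{l} κ̃_{1,j}) e^{(n)}_l h^{(n)}_{m−l} = 0` in `PolC_I`. -/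
theorem complete_vs_elementary_vanishing (k : Type) [Field k] (n : ℕ) (p : Fin n → Bool)
    (hn : 2 ≤ n) (m : ℕ) (hm : 1 ≤ m) :
    (∑ l ∈ Finset.range (m + 1),
        (-1 : PolC k n p) ^ l * hsym k n p (m - l) *
          ((List.range (l - 1)).map (fun t => kappaT (PolC k n p) n p (Cc k n p) 1 (t + 2))).prod *
          esym k n p n l) = 0 ∧
    (∑ l ∈ Finset.range (m + 1),
        (-1 : PolC k n p) ^ l *
          ((List.range (l - 1)).map (fun t => kappaT (PolC k n p) n p (Cc k n p) 1 (t + 2))).prod *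
          esym k n p n l * hsym k n p (m - l)) = 0 := by
  have : NeZero n := ⟨by omega⟩
  simp only [hsym_eq_companionMatrix_pow]
  exact ⟨alternating_sum_companionMatrix_pow_mul_eq_zero _ _ (esym_zero n)
      (fun _ => esym_eq_zero_of_lt) m hm,
    alternating_sum_mul_companionMatrix_pow_eq_zero _ _ (esym_zero n)
      (fun _ => esym_eq_zero_of_lt) m hm⟩

end
end

section
/- If v, w ∈ S_n satisfy ℓ(w) = ℓ(w v^{−1}) + ℓ(v) (where ℓ denotes Coxeter length), then d_v(s_w) = s_{w v^{−1}}; that is, applying the divided-difference operator d_v to the d-Schubert polynomial s_w yields the d-Schubert polynomial of w v^{−1}. -/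
noncomputable section

/-- The Coxeter length of a permutation of `Fin n` (= its number of inversions). -/
def len (n : ℕ) (w : Equiv.Perm (Fin n)) : ℕ :=
  (Finset.univ.filter fun x : Fin n × Fin n => x.1 < x.2 ∧ w x.2 < w x.1).card

/-- The staircase monomial `y₁^{n-1} y₂^{n-2} ⋯ y_{n-1}` (0-based: `Y i` has exponent
`n - 1 - i`). -/
def staircase (k : Type) [Field k] (n : ℕ) (p : Fin n → Bool) : PolC k n p :=
  ((List.finRange n).map (fun i => Y k n p i ^ (n - 1 - (i : ℕ)))).prod

/-- The hypothesis that `D` assigns to each `w ∈ S_n` the operator `d_w = d_{i₁} ∘ ⋯ ∘ d_{i_r}`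
for a reduced expression `w = s_{i₁} ⋯ s_{i_r}`: equivalently, `D 1 = id`, `D sᵢ = dᵢ`, and
`D` is multiplicative on length-additive products. -/
def DFamSpec (k : Type) [Field k] (n : ℕ) (p : Fin n → Bool)
    (d : ∀ i : ℕ, i + 1 < n → (PolC k n p →ₗ[k] PolC k n p))
    (D : Equiv.Perm (Fin n) → (PolC k n p →ₗ[k] PolC k n p)) : Prop :=
  D 1 = LinearMap.id ∧
  (∀ (i : ℕ) (hi : i + 1 < n), D (Equiv.swap ⟨i, by omega⟩ ⟨i + 1, hi⟩) = d i hi) ∧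
  (∀ u v : Equiv.Perm (Fin n), len n (u * v) = len n u + len n v →
    D (u * v) = (D u).comp (D v))

/-- The `𝔡`-Schubert polynomial `𝔰_w = 𝔡_{w⁻¹ w₀}(y₁^{n-1} ⋯ y_{n-1})`, where `w₀` is the
longest element of `S_n`. -/
def schubert (k : Type) [Field k] (n : ℕ) (p : Fin n → Bool)
    (D : Equiv.Perm (Fin n) → (PolC k n p →ₗ[k] PolC k n p)) (w : Equiv.Perm (Fin n)) :
    PolC k n p :=
  D (w⁻¹ * Fin.revPerm) (staircase k n p)

/-! With `w₀ = Fin.revPerm`, every inversion pair of `u` is a non-inversion of `u w₀` and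
conversely, so `ℓ(u w₀) + ℓ(u) = ℓ(w₀)`; together with `ℓ(u⁻¹) = ℓ(u)` this turns the hypothesis
`ℓ(w) = ℓ(w v⁻¹) + ℓ(v)` into `ℓ(v · w⁻¹w₀) = ℓ(v) + ℓ(w⁻¹w₀)`. Since
`(w v⁻¹)⁻¹ w₀ = v · w⁻¹w₀`, the claim is then multiplicativity of `𝔡` on length-additive
products. -/

section Length

variable {n : ℕ}

lemma len_inv (u : Equiv.Perm (Fin n)) : len n u⁻¹ = len n u := by
  refine Finset.card_nbij' (fun x => (u⁻¹ x.2, u⁻¹ x.1)) (fun x => (u x.2, u x.1)) ?_ ?_ ?_ ?_ <;>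
    rintro ⟨a, b⟩ <;> simp +contextual

lemma len_mul_revPerm (u : Equiv.Perm (Fin n)) :
    len n (u * Fin.revPerm) =
      (Finset.univ.filter fun x : Fin n × Fin n => x.1 < x.2 ∧ u x.1 < u x.2).card := by
  refine Finset.card_nbij' (fun x => (x.2.rev, x.1.rev)) (fun x => (x.2.rev, x.1.rev))
    ?_ ?_ ?_ ?_ <;> rintro ⟨a, b⟩ <;> simp +contextual

lemma len_revPerm :
    len n Fin.revPerm = (Finset.univ.filter fun x : Fin n × Fin n => x.1 < x.2).card := by
  simp [len]

lemma len_mul_revPerm_add_len (u : Equiv.Perm (Fin n)) :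
    len n (u * Fin.revPerm) + len n u = len n Fin.revPerm := by
  have inversion_iff (x : Fin n × Fin n) (hx : x.1 < x.2) : u x.2 < u x.1 ↔ ¬u x.1 < u x.2 :=
    (u.injective.ne hx.ne').le_iff_lt.symm.trans not_lt.symm
  rw [len_mul_revPerm, len_revPerm, len,
    ← Finset.card_filter_add_card_filter_not (s := Finset.univ.filter fun x => x.1 < x.2)
      (fun x : Fin n × Fin n => u x.1 < u x.2),
    Finset.filter_filter, Finset.filter_filter]
  congr 2
  exact Finset.filter_congr fun x _ => and_congr_right (inversion_iff x)

lemma len_mul_inv_mul_revPerm {v w : Equiv.Perm (Fin n)}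
    (h : len n w = len n (w * v⁻¹) + len n v) :
    len n (v * (w⁻¹ * Fin.revPerm)) = len n v + len n (w⁻¹ * Fin.revPerm) := by
  have hvw := len_mul_revPerm_add_len (v * w⁻¹)
  have hw := len_mul_revPerm_add_len w⁻¹
  rw [← len_inv (v * w⁻¹), mul_inv_rev, inv_inv] at hvw
  rw [len_inv] at hw
  rw [← mul_assoc]
  omega

end Length

theorem demazure_schubert_general (k : Type) [Field k] (n : ℕ) (p : Fin n → Bool)
    (d : ∀ i : ℕ, i + 1 < n → (PolC k n p →ₗ[k] PolC k n p))
    (D : Equiv.Perm (Fin n) → (PolC k n p →ₗ[k] PolC k n p))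
    (hD : DFamSpec k n p d D)
    (v w : Equiv.Perm (Fin n)) (hlen : len n w = len n (w * v⁻¹) + len n v) :
    D v (schubert k n p D w) = schubert k n p D (w * v⁻¹) := by
  have hperm : (w * v⁻¹)⁻¹ * Fin.revPerm = v * (w⁻¹ * Fin.revPerm) := by group
  rw [schubert, schubert, hperm, hD.2.2 v _ (len_mul_inv_mul_revPerm hlen)]
  rfl

/-- if `ℓ(w) = ℓ(w v⁻¹) + ℓ(v)` then `𝔡_v(𝔰_w) = 𝔰_{w v⁻¹}`. -/
theorem demazure_schubert (k : Type) [Field k] (n : ℕ) (p : Fin n → Bool) (hn : 2 ≤ n)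
    (si : ∀ i : ℕ, i + 1 < n → (PolC k n p →ₐ[k] PolC k n p))
    (hsi : ∀ (i : ℕ) (hi : i + 1 < n), SwapSpec k n p i hi (si i hi))
    (d : ∀ i : ℕ, i + 1 < n → (PolC k n p →ₗ[k] PolC k n p))
    (hd : ∀ (i : ℕ) (hi : i + 1 < n), DemSpec k n p i hi (si i hi) (d i hi))
    (D : Equiv.Perm (Fin n) → (PolC k n p →ₗ[k] PolC k n p))
    (hD : DFamSpec k n p d D)
    (v w : Equiv.Perm (Fin n)) (hlen : len n w = len n (w * v⁻¹) + len n v) :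
    D v (schubert k n p D w) = schubert k n p D (w * v⁻¹) :=
  demazure_schubert_general k n p d D hD v w hlen

end
end
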